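/- arXiv:1805.01311 — 2 statements merged into one kernel-verified Lean document; each statement's English description precedes it below -/
import Mathlib

section
/- Let G be an HRLQ instance, and suppose M1 is a matching of G that is stable in the instance G1 and satisfies |M1(h)| = q⁻(h) for every hospital h. Let M2 be a stable matching of the instance G' defined from M1. Then M = M1 ∪ M2 is a feasible matching of G that is maximal envy-free in G. -/
open scoped Classical

/-- An HRLQ instance on residents `R` and hospitals `H`: an edge set (acceptability
relation), strict preference relations of residents over hospitals and of hospitals
over residents (strict, transitive, total over neighbors), and lower/upper quotas. -/
structure HRLQ (R H : Type) where
  E : Finset (R × H)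
  /-- `rp r h h'` : resident `r` strictly prefers hospital `h` over `h'`. -/
  rp : R → H → H → Prop
  /-- `hp h r r'` : hospital `h` strictly prefers resident `r` over `r'`. -/
  hp : H → R → R → Prop
  lq : H → ℕ
  uq : H → ℕ
  lq_le_uq : ∀ h, lq h ≤ uq h
  uq_pos : ∀ h, 1 ≤ uq h
  rp_irrefl : ∀ r h, ¬ rp r h h
  rp_trans : ∀ r h₁ h₂ h₃, rp r h₁ h₂ → rp r h₂ h₃ → rp r h₁ h₃
  rp_total : ∀ r h₁ h₂, (r, h₁) ∈ E → (r, h₂) ∈ E → h₁ ≠ h₂ → rp r h₁ h₂ ∨ rp r h₂ h₁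
  hp_irrefl : ∀ h r, ¬ hp h r r
  hp_trans : ∀ h r₁ r₂ r₃, hp h r₁ r₂ → hp h r₂ r₃ → hp h r₁ r₃
  hp_total : ∀ h r₁ r₂, (r₁, h) ∈ E → (r₂, h) ∈ E → r₁ ≠ r₂ → hp h r₁ r₂ ∨ hp h r₂ r₁

namespace HRLQ

variable {R H : Type} [Fintype R] [Fintype H] [DecidableEq R] [DecidableEq H]

/-- `M(h)`: the set of residents assigned to hospital `h` by `M`.
A matching is represented as a function `M : R → Option H` assigning to each resident
at most one hospital (`none` = unmatched). -/
noncomputable def assigned (M : R → Option H) (h : H) : Finset R :=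
  Finset.univ.filter fun r => M r = some h

/-- `M` is a matching with respect to edge set `E` and upper quotas `q`:
every matched pair is an edge and no hospital exceeds its upper quota.
(Each resident is matched to at most one hospital by the functional representation.) -/
def IsMatchingIn (E : Finset (R × H)) (q : H → ℕ) (M : R → Option H) : Prop :=
  (∀ r h, M r = some h → (r, h) ∈ E) ∧ ∀ h, (assigned M h).card ≤ q h

/-- `M` is a matching of the instance `G`. -/
def IsMatching (G : HRLQ R H) (M : R → Option H) : Prop :=
  IsMatchingIn G.E G.uq M

/-- `M` is a feasible matching of `G`: a matching meeting all lower quotas. -/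
def Feasible (G : HRLQ R H) (M : R → Option H) : Prop :=
  IsMatching G M ∧ ∀ h, G.lq h ≤ (assigned M h).card

/-- Resident `r` is unmatched in `M` or prefers `h` over `M(r)`. -/
def WantsMore (G : HRLQ R H) (M : R → Option H) (r : R) (h : H) : Prop :=
  ∀ h', M r = some h' → G.rp r h h'

/-- The pair `(r,h)` blocks `M`, with respect to edge set `E` and upper quotas `q`. -/
def BlocksIn (G : HRLQ R H) (E : Finset (R × H)) (q : H → ℕ)
    (M : R → Option H) (r : R) (h : H) : Prop :=
  (r, h) ∈ E ∧ M r ≠ some h ∧ WantsMore G M r h ∧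
    ((assigned M h).card < q h ∨ ∃ r' ∈ assigned M h, G.hp h r r')

/-- The pair `(r,h)` blocks `M` in the instance `G`. -/
def Blocks (G : HRLQ R H) (M : R → Option H) (r : R) (h : H) : Prop :=
  BlocksIn G G.E G.uq M r h

/-- `M` is stable in `G`: no blocking pair. -/
def Stable (G : HRLQ R H) (M : R → Option H) : Prop :=
  ∀ r h, ¬ Blocks G M r h

/-- Resident `r` has justified envy toward `r'` (matched to some hospital `h`) w.r.t. `M`. -/
def JustifiedEnvy (G : HRLQ R H) (M : R → Option H) (r r' : R) : Prop :=
  ∃ h, M r' = some h ∧ (r, h) ∈ G.E ∧ G.hp h r r' ∧ WantsMore G M r h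

/-- `M` is envy-free: no resident has justified envy toward another. -/
def EnvyFree (G : HRLQ R H) (M : R → Option H) : Prop :=
  ∀ r r', ¬ JustifiedEnvy G M r r'

/-- `M` is a maximal envy-free matching of `G`: it is envy-free, and for every edge
`(r,h) ∈ E \ M`, `M ∪ {(r,h)}` is not an envy-free matching (either it is not a valid
matching, or it is not envy-free). -/
def MaximalEnvyFree (G : HRLQ R H) (M : R → Option H) : Prop :=
  EnvyFree G M ∧ ∀ r h, (r, h) ∈ G.E → M r ≠ some h →
    ¬ (M r = none ∧ IsMatching G (Function.update M r (some h)) ∧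
        EnvyFree G (Function.update M r (some h)))

/-- `r'` is a candidate threshold resident for `h` w.r.t. `M1`: a neighbor of `h`
that is matched in `M1` and prefers `h` over its `M1`-partner. -/
def ThresholdCand (G : HRLQ R H) (M1 : R → Option H) (h : H) (r' : R) : Prop :=
  (r', h) ∈ G.E ∧ ∃ h', M1 r' = some h' ∧ G.rp r' h h'

/-- `rho` is the threshold resident of `h` w.r.t. `M1` (`none` encodes the dummy
resident used when no candidate exists): the candidate most preferred by `h`. -/
def IsThreshold (G : HRLQ R H) (M1 : R → Option H) (h : H) : Option R → Prop
  | none => ∀ r', ¬ ThresholdCand G M1 h r'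
  | some rh => ThresholdCand G M1 h rh ∧
      ∀ r', ThresholdCand G M1 h r' → r' ≠ rh → G.hp h rh r'

/-- `h` prefers `r` over the threshold resident `rho` (`none` = dummy resident,
less preferred by `h` than any neighbor). -/
def PrefThreshold (G : HRLQ R H) (h : H) : Option R → R → Prop
  | none, _ => True
  | some rh, r => G.hp h r rh

/-- The edge set `E'` of the reduced instance `G'` built from `M1` and the threshold
residents `rho`: edges `(r,h) ∈ E` with `r` unmatched in `M1` (i.e. `r ∈ R'`),
`h` under-subscribed (i.e. `h ∈ H'`), and `h` preferring `r` over its threshold resident. -/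
noncomputable def Ered (G : HRLQ R H) (M1 : R → Option H) (rho : H → Option R) :
    Finset (R × H) :=
  G.E.filter fun p =>
    M1 p.1 = none ∧ (assigned M1 p.2).card < G.uq p.2 ∧
      PrefThreshold G p.2 (rho p.2) p.1

/-- The upper quotas of the reduced instance `G'`. -/
def qred (G : HRLQ R H) : H → ℕ := fun h => G.uq h - G.lq h

/-- The union `M1 ∪ M2` of two matchings (with disjoint sets of matched residents). -/
def munion (M1 M2 : R → Option H) : R → Option H := fun r =>
  match M1 r with
  | some h => some h
  | none => M2 r

/-- The vote of resident `r` comparing assignment `a` (in `M`) with `b` (in `M'`):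
`1` if `r` prefers `a`, `-1` if `r` prefers `b`, `0` otherwise; being unmatched is
less preferred than being matched to any neighbor. -/
noncomputable def rvote (G : HRLQ R H) (r : R) (a b : Option H) : ℤ :=
  if a = b then 0
  else
    match a, b with
    | none, _ => -1
    | _, none => 1
    | some h, some h' => if G.rp r h h' then 1 else if G.rp r h' h then -1 else 0

/-- `P` encodes a legal correspondence `corr_h` for hospital `h` comparing `M` with `M'`:
a pairing of `M(h) \ M'(h)` with `M'(h) \ M(h)` (unpaired residents being paired with
distinct dummy residents after padding both sides to size `q⁺(h)`). -/
def IsCorr (G : HRLQ R H) (M M' : R → Option H) (h : H) (P : Finset (R × R)) : Prop :=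
  (∀ p ∈ P, p.1 ∈ assigned M h \ assigned M' h ∧ p.2 ∈ assigned M' h \ assigned M h) ∧
  (∀ p ∈ P, ∀ q ∈ P, (p.1 = q.1 ∨ p.2 = q.2) → p = q) ∧
  (assigned M h \ assigned M' h).card + (assigned M' h \ assigned M h).card - P.card
    ≤ G.uq h

/-- The total vote of hospital `h` comparing `M` with `M'` under the correspondence `P`
(positive contributions favor `M`): paired residents are compared by `h`'s preference;
a resident of `M(h) \ M'(h)` paired with a dummy contributes `+1`; a dummy paired with a
resident of `M'(h) \ M(h)` contributes `-1`; dummy-dummy pairs contribute `0`. -/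
noncomputable def hvote (G : HRLQ R H) (M M' : R → Option H) (h : H)
    (P : Finset (R × R)) : ℤ :=
  (∑ p ∈ P, if G.hp h p.1 p.2 then (1 : ℤ) else -1)
    + (((assigned M h \ assigned M' h).card - P.card : ℕ) : ℤ)
    - (((assigned M' h \ assigned M h).card - P.card : ℕ) : ℤ)

/-- The total vote of all residents and hospitals comparing `M` with `M'` under the
correspondences `P`; positive values favor `M`, negative values favor `M'`. -/
noncomputable def totalVote (G : HRLQ R H) (M M' : R → Option H)
    (P : H → Finset (R × R)) : ℤ :=
  (∑ r, rvote G r (M r) (M' r)) + ∑ h, hvote G M M' h (P h)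

/-- `M'` is more popular than `M` with respect to the chosen correspondences `P`. -/
def MorePopular (G : HRLQ R H) (M' M : R → Option H) (P : H → Finset (R × R)) : Prop :=
  totalVote G M M' P < 0

/-- `M` is a feasible matching popular amongst the set of feasible matchings: no feasible
matching `M'` is more popular than `M` under any choice of correspondences. -/
def PopularAmongFeasible (G : HRLQ R H) (M : R → Option H) : Prop :=
  Feasible G M ∧ ∀ M' P, Feasible G M' → (∀ h, IsCorr G M M' h (P h)) →
    ¬ MorePopular G M' M P

/-- `M` is a popular matching: no matching `M'` is more popular than `M` under any
choice of correspondences. -/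
def Popular (G : HRLQ R H) (M : R → Option H) : Prop :=
  IsMatching G M ∧ ∀ M' P, IsMatching G M' → (∀ h, IsCorr G M M' h (P h)) →
    ¬ MorePopular G M' M P

/-- The size of a matching: the number of matched residents. -/
noncomputable def msize (M : R → Option H) : ℕ :=
  (Finset.univ.filter fun r => M r ≠ none).card

/-- Resident `r` is matched in `M` to its rank-1 (most preferred) hospital. -/
def Rank1 (G : HRLQ R H) (M : R → Option H) (r : R) : Prop :=
  ∃ h, M r = some h ∧ ∀ h', (r, h') ∈ G.E → h' ≠ h → G.rp r h h'

/-- The number of residents matched to their rank-1 hospital in `M`. -/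
noncomputable def rank1Count (G : HRLQ R H) (M : R → Option H) : ℕ :=
  (Finset.univ.filter fun r => Rank1 G M r).card

/-- The number of residents who prefer their assignment in `M` over that in `M'`. -/
noncomputable def prefCount (G : HRLQ R H) (M M' : R → Option H) : ℕ :=
  (Finset.univ.filter fun r => rvote G r (M r) (M' r) = 1).card

end HRLQ

/-!
Envy-freeness of `M = M1 ∪ M2`: a resident envying someone matched in `M1` would block `M1`
in `G1`, and one envying someone matched in `M2` beats the threshold resident, so it cannot be
matched in `M1` (the threshold is the best resident of `M1` wanting `h`) and then blocks `M2`
in `G'`. Maximality: adding an edge `(r, h)` at a hospital below its upper quota, without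
creating envy, forces `h` to prefer `r` over its threshold resident (who would otherwise envy
`r`), so `(r, h)` is an edge of `G'` at an under-subscribed hospital and blocks `M2`.
-/

namespace HRLQ

variable {R H : Type}

section Preferences

variable {G : HRLQ R H} {M M' M1 M2 : R → Option H} {r r' : R} {h : H}

theorem munion_eq_some_iff :
    munion M1 M2 r = some h ↔ M1 r = some h ∨ (M1 r = none ∧ M2 r = some h) := by
  unfold munion
  cases M1 r <;> simp

theorem munion_eq_none_iff : munion M1 M2 r = none ↔ M1 r = none ∧ M2 r = none := by
  unfold munion
  cases M1 r <;> simp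

theorem munion_eq_some_of_left (h1 : M1 r = some h) : munion M1 M2 r = some h :=
  munion_eq_some_iff.2 (Or.inl h1)

theorem munion_eq_some_of_right (h1 : M1 r = none) (h2 : M2 r = some h) :
    munion M1 M2 r = some h :=
  munion_eq_some_iff.2 (Or.inr ⟨h1, h2⟩)

theorem WantsMore.of_eq_none (hr : M r = none) : WantsMore G M r h := by
  intro h' hh'
  simp [hr] at hh'

theorem WantsMore.ne_some (hw : WantsMore G M r h) : M r ≠ some h :=
  fun hr => G.rp_irrefl r h (hw h hr)

theorem WantsMore.anti (hsub : ∀ h', M' r = some h' → M r = some h')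
    (hw : WantsMore G M r h) : WantsMore G M' r h :=
  fun h' hh' => hw h' (hsub h' hh')

theorem PrefThreshold.of_hp {ρ : Option R} (hpref : G.hp h r r')
    (hr' : PrefThreshold G h ρ r') : PrefThreshold G h ρ r := by
  cases ρ with
  | none => trivial
  | some rh => exact G.hp_trans h r r' rh hpref hr'

theorem IsThreshold.not_thresholdCand {ρ : Option R} (hth : IsThreshold G M1 h ρ)
    (hr : PrefThreshold G h ρ r) : ¬ ThresholdCand G M1 h r := by
  intro hcand
  cases ρ with
  | none => exact hth r hcand
  | some rh =>
    have hr : G.hp h r rh := hr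
    by_cases hrh : r = rh
    · exact G.hp_irrefl h r (hrh ▸ hr)
    · exact G.hp_irrefl h r (G.hp_trans h r rh r hr (hth.2 r hcand hrh))

theorem IsThreshold.prefThreshold_of_envyFree {M : R → Option H} {ρ : Option R}
    (hth : IsThreshold G M1 h ρ) (hEF : EnvyFree G M)
    (hsub : ∀ r' h', M1 r' = some h' → M r' = some h') (hrE : (r, h) ∈ G.E)
    (hr : M r = some h) : PrefThreshold G h ρ r := by
  cases ρ with
  | none => trivial
  | some rh =>
    obtain ⟨⟨hrhE, h', hrh1, hrh_pref⟩, -⟩ := hth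
    have hrh : M rh = some h' := hsub rh h' hrh1
    have hne : r ≠ rh := by
      rintro rfl
      rw [hr, Option.some_inj] at hrh
      exact G.rp_irrefl r h (hrh ▸ hrh_pref)
    refine (G.hp_total h r rh hrE hrhE hne).resolve_right fun hpref => hEF rh r ?_
    refine ⟨h, hr, hrhE, hpref, fun h'' hh'' => ?_⟩
    rw [hrh, Option.some_inj] at hh''
    exact hh'' ▸ hrh_pref

end Preferences

section Assigned

variable [Fintype R] [DecidableEq H] {G : HRLQ R H} {M M1 M2 : R → Option H}
  {rho : H → Option R} {r r' : R} {h : H}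

theorem mem_assigned : r ∈ assigned M h ↔ M r = some h := by
  simp [assigned]

theorem card_assigned_munion (hdisj : ∀ r h, M2 r = some h → M1 r = none) (h : H) :
    (assigned (munion M1 M2) h).card = (assigned M1 h).card + (assigned M2 h).card := by
  have hunion : assigned (munion M1 M2) h = assigned M1 h ∪ assigned M2 h := by
    ext r
    simp only [Finset.mem_union, mem_assigned, munion_eq_some_iff]
    constructor
    · rintro (h1 | ⟨-, h2⟩) <;> simp [*]
    · rintro (h1 | h2)
      · exact Or.inl h1
      · exact Or.inr ⟨hdisj r h h2, h2⟩
  rw [hunion, Finset.card_union_of_disjoint]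
  refine Finset.disjoint_left.2 fun r h1 h2 => ?_
  rw [mem_assigned] at h1 h2
  simp [hdisj r h h2] at h1

theorem card_assigned_update_of_eq_none [DecidableEq R] (hr : M r = none) :
    (assigned (Function.update M r (some h)) h).card = (assigned M h).card + 1 := by
  have hinsert : assigned (Function.update M r (some h)) h = insert r (assigned M h) := by
    ext r'
    by_cases hr' : r' = r
    · subst hr'; simp [mem_assigned]
    · simp [mem_assigned, hr']
  rw [hinsert, Finset.card_insert_of_notMem (by simp [mem_assigned, hr])]

theorem blocksIn_of_envy {E : Finset (R × H)} {q : H → ℕ} (hrE : (r, h) ∈ E)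
    (hw : WantsMore G M r h) (hr' : M r' = some h) (hpref : G.hp h r r') :
    BlocksIn G E q M r h :=
  ⟨hrE, hw.ne_some, hw, Or.inr ⟨r', mem_assigned.2 hr', hpref⟩⟩

theorem mem_Ered :
    (r, h) ∈ Ered G M1 rho ↔ (r, h) ∈ G.E ∧ M1 r = none ∧
      (assigned M1 h).card < G.uq h ∧ PrefThreshold G h (rho h) r := by
  simp [Ered]

theorem IsMatchingIn.eq_none_of_Ered {q : H → ℕ} (hM2 : IsMatchingIn (Ered G M1 rho) q M2) :
    ∀ r h, M2 r = some h → M1 r = none :=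
  fun r h h2 => (mem_Ered.1 (hM2.1 r h h2)).2.1

end Assigned

section Union

variable [Fintype R] [DecidableEq H] {G : HRLQ R H} {M1 M2 : R → Option H} {rho : H → Option R}

theorem feasible_munion (hM1 : IsMatching G M1) (hM1full : ∀ h, (assigned M1 h).card = G.lq h)
    (hM2 : IsMatchingIn (Ered G M1 rho) (qred G) M2) : Feasible G (munion M1 M2) := by
  have hcard (h : H) : (assigned (munion M1 M2) h).card = G.lq h + (assigned M2 h).card := by
    rw [card_assigned_munion hM2.eq_none_of_Ered, hM1full]
  refine ⟨⟨fun r h hr => ?_, fun h => ?_⟩, fun h => by rw [hcard]; omega⟩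
  · rcases munion_eq_some_iff.1 hr with h1 | ⟨-, h2⟩
    · exact hM1.1 r h h1
    · exact (mem_Ered.1 (hM2.1 r h h2)).1
  · have hM2h : (assigned M2 h).card ≤ G.uq h - G.lq h := hM2.2 h
    have := G.lq_le_uq h
    rw [hcard]
    omega

theorem envyFree_munion (hM1stab : ∀ r h, ¬ BlocksIn G G.E G.lq M1 r h)
    (hrho : ∀ h, (assigned M1 h).card < G.uq h → IsThreshold G M1 h (rho h))
    (hM2 : IsMatchingIn (Ered G M1 rho) (qred G) M2)
    (hM2stab : ∀ r h, ¬ BlocksIn G (Ered G M1 rho) (qred G) M2 r h) :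
    EnvyFree G (munion M1 M2) := by
  rintro r r' ⟨h, hr', hrE, hpref, hw⟩
  rcases munion_eq_some_iff.1 hr' with hr'1 | ⟨-, hr'2⟩
  · exact hM1stab r h <| blocksIn_of_envy hrE (hw.anti fun _ => munion_eq_some_of_left) hr'1 hpref
  · obtain ⟨-, -, hunder, hr'th⟩ := mem_Ered.1 (hM2.1 r' h hr'2)
    have hrth : PrefThreshold G h (rho h) r := hr'th.of_hp hpref
    cases hr1 : M1 r with
    | some h₀ =>
      exact (hrho h hunder).not_thresholdCand hrth
        ⟨hrE, h₀, hr1, hw h₀ (munion_eq_some_of_left hr1)⟩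
    | none =>
      exact hM2stab r h <| blocksIn_of_envy (mem_Ered.2 ⟨hrE, hr1, hunder, hrth⟩)
        (hw.anti fun _ h2 => munion_eq_some_of_right (hM2.eq_none_of_Ered _ _ h2) h2) hr'2 hpref

theorem not_envyFree_update_munion [DecidableEq R]
    (hM1full : ∀ h, (assigned M1 h).card = G.lq h)
    (hrho : ∀ h, (assigned M1 h).card < G.uq h → IsThreshold G M1 h (rho h))
    (hM2 : IsMatchingIn (Ered G M1 rho) (qred G) M2)
    (hM2stab : ∀ r h, ¬ BlocksIn G (Ered G M1 rho) (qred G) M2 r h)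
    {r : R} {h : H} (hrE : (r, h) ∈ G.E) (hr : munion M1 M2 r = none)
    (hM' : IsMatching G (Function.update (munion M1 M2) r (some h))) :
    ¬ EnvyFree G (Function.update (munion M1 M2) r (some h)) := by
  intro hEF
  obtain ⟨hr1, hr2⟩ := munion_eq_none_iff.1 hr
  have hroom : G.lq h + (assigned M2 h).card + 1 ≤ G.uq h := by
    simpa [card_assigned_update_of_eq_none hr, card_assigned_munion hM2.eq_none_of_Ered,
      hM1full] using hM'.2 h
  have hunder : (assigned M1 h).card < G.uq h := by rw [hM1full]; omega
  have hsub : ∀ r' h', M1 r' = some h' →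
      Function.update (munion M1 M2) r (some h) r' = some h' := by
    intro r' h' h1
    rw [Function.update_of_ne (by rintro rfl; simp [hr1] at h1)]
    exact munion_eq_some_of_left h1
  have hrth : PrefThreshold G h (rho h) r :=
    (hrho h hunder).prefThreshold_of_envyFree hEF hsub hrE (by simp)
  refine hM2stab r h ⟨mem_Ered.2 ⟨hrE, hr1, hunder, hrth⟩, by simp [hr2],
    WantsMore.of_eq_none hr2, Or.inl (by unfold qred; omega)⟩

end Union

end HRLQ

theorem statement0_general {R H : Type} [Fintype R] [DecidableEq R] [DecidableEq H]
    (G : HRLQ R H) (M1 M2 : R → Option H) (rho : H → Option R)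
    (hM1 : HRLQ.IsMatching G M1)
    (hM1stab : ∀ r h, ¬ HRLQ.BlocksIn G G.E G.lq M1 r h)
    (hM1full : ∀ h, (HRLQ.assigned M1 h).card = G.lq h)
    (hrho : ∀ h, (HRLQ.assigned M1 h).card < G.uq h → HRLQ.IsThreshold G M1 h (rho h))
    (hM2 : HRLQ.IsMatchingIn (HRLQ.Ered G M1 rho) (HRLQ.qred G) M2)
    (hM2stab : ∀ r h, ¬ HRLQ.BlocksIn G (HRLQ.Ered G M1 rho) (HRLQ.qred G) M2 r h) :
    HRLQ.Feasible G (HRLQ.munion M1 M2) ∧ HRLQ.MaximalEnvyFree G (HRLQ.munion M1 M2) :=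
  ⟨HRLQ.feasible_munion hM1 hM1full hM2,
    HRLQ.envyFree_munion hM1stab hrho hM2 hM2stab,
    fun _ _ hrE _ ⟨hr, hM', hEF⟩ =>
      HRLQ.not_envyFree_update_munion hM1full hrho hM2 hM2stab hrE hr hM' hEF⟩

/-- If `M1` is a matching of `G` that is stable in `G1` and fills every
lower quota exactly, and `M2` is a stable matching of the reduced instance `G'` built
from `M1`, then `M = M1 ∪ M2` is a feasible matching of `G` that is maximal envy-free. -/
theorem statement0 {R H : Type} [Fintype R] [Fintype H] [DecidableEq R] [DecidableEq H]
    (G : HRLQ R H) (M1 M2 : R → Option H) (rho : H → Option R)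
    (hM1 : HRLQ.IsMatching G M1)
    (hM1stab : ∀ r h, ¬ HRLQ.BlocksIn G G.E G.lq M1 r h)
    (hM1full : ∀ h, (HRLQ.assigned M1 h).card = G.lq h)
    (hrho : ∀ h, (HRLQ.assigned M1 h).card < G.uq h → HRLQ.IsThreshold G M1 h (rho h))
    (hM2 : HRLQ.IsMatchingIn (HRLQ.Ered G M1 rho) (HRLQ.qred G) M2)
    (hM2stab : ∀ r h, ¬ HRLQ.BlocksIn G (HRLQ.Ered G M1 rho) (HRLQ.qred G) M2 r h) :
    HRLQ.Feasible G (HRLQ.munion M1 M2) ∧ HRLQ.MaximalEnvyFree G (HRLQ.munion M1 M2) :=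
  statement0_general G M1 M2 rho hM1 hM1stab hM1full hrho hM2 hM2stab
end

section
/- There exists an HR instance in which every hospital has upper quota 1, together with a stable matching M_s and a popular matching M_p with |M_p| > |M_s|, such that strictly more residents are matched to their rank-1 hospital in M_p than in M_s, and strictly more residents prefer their assignment in M_p over their assignment in M_s than prefer their assignment in M_s over their assignment in M_p. -/
open scoped Classical

/-!
In the instance below, `r₀, r₁ / h₀, h₁` form a path `h₁ - r₀ - h₀ - r₁` in which `r₀` and `h₀`
are each other's first choice, so a stable matching must pair them and leave `r₁` and `h₁`
alone; the popular matching instead pairs `r₀ - h₁` and `r₁ - h₀`. The remaining 2 × 2 block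
has opposed preferences: the stable matching chosen there is hospital-optimal, the popular one
resident-optimal.

For unit quotas, popularity is certified by a dual witness `α` on the vertices: if `α r + α h`
bounds the votes of `r` and `h` for each other against `M`, `α v` bounds the vote of `v` for
being unmatched, and `∑ α ≤ 0`, then summing over the edges and the unmatched vertices of any
matching `M'` bounds the margin of `M'` over `M` by `∑ α`.
-/

namespace HRLQ

variable {R H : Type}

def ofRanks (E : Finset (R × H)) (rrank : R → H → ℕ) (hrank : H → R → ℕ) (q : H → ℕ)
    (hq : ∀ h, 1 ≤ q h)
    (hr : ∀ r h₁ h₂, (r, h₁) ∈ E → (r, h₂) ∈ E → rrank r h₁ = rrank r h₂ → h₁ = h₂)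
    (hh : ∀ h r₁ r₂, (r₁, h) ∈ E → (r₂, h) ∈ E → hrank h r₁ = hrank h r₂ → r₁ = r₂) :
    HRLQ R H where
  E := E
  rp r h h' := rrank r h < rrank r h'
  hp h r r' := hrank h r < hrank h r'
  lq _ := 0
  uq := q
  lq_le_uq _ := Nat.zero_le _
  uq_pos := hq
  rp_irrefl _ _ := lt_irrefl _
  rp_trans _ _ _ _ := lt_trans
  rp_total r _ _ h₁ h₂ hne := lt_or_gt_of_ne fun he => hne (hr r _ _ h₁ h₂ he)
  hp_irrefl _ _ := lt_irrefl _
  hp_trans _ _ _ _ := lt_trans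
  hp_total h _ _ h₁ h₂ hne := lt_or_gt_of_ne fun he => hne (hh h _ _ h₁ h₂ he)

variable [Fintype R] [DecidableEq H]

theorem assigned_eq_singleton {M : R → Option H} {r : R} {h : H} (hr : M r = some h)
    (hM : (assigned M h).card ≤ 1) : assigned M h = {r} :=
  have hr_mem : r ∈ assigned M h := by simpa [assigned] using hr
  Finset.eq_singleton_iff_unique_mem.mpr
    ⟨hr_mem, fun r' hr' => Finset.card_le_one.mp hM r' hr' r hr_mem⟩

variable [DecidableEq R]

noncomputable def unitHVote (G : HRLQ R H) (h : H) (a b : Option R) : ℤ :=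
  if a = b then 0
  else
    match a, b with
    | none, _ => -1
    | _, none => 1
    | some r, some r' => if G.hp h r r' then 1 else -1

theorem hvote_eq_unitHVote {G : HRLQ R H} {M M' : R → Option H} {h : H} {P : Finset (R × R)}
    {a b : Option R} (hq : G.uq h = 1) (ha : assigned M h = a.toFinset)
    (hb : assigned M' h = b.toFinset) (hP : IsCorr G M M' h P) :
    hvote G M M' h P = unitHVote G h a b := by
  obtain ⟨hmem, -, hcard⟩ := hP
  unfold hvote unitHVote
  rw [ha, hb] at hmem hcard ⊢
  have hsub : P ⊆ (a.toFinset \ b.toFinset) ×ˢ (b.toFinset \ a.toFinset) :=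
    fun p hp => Finset.mem_product.mpr (hmem p hp)
  by_cases hab : a = b
  · subst hab
    simp_all
  rcases a with _ | r <;> rcases b with _ | r'
  · exact absurd rfl hab
  · simp_all
  · simp_all
  · have hrr' : r ≠ r' := fun h => hab (congrArg some h)
    have hr : ({r} : Finset R) \ {r'} = {r} := by simp [hrr']
    have hr' : ({r'} : Finset R) \ {r} = {r'} := by simp [hrr'.symm]
    simp only [Option.toFinset_some, hr, hr', Finset.singleton_product_singleton,
      Finset.subset_singleton_iff] at hsub hcard ⊢
    rcases hsub with rfl | rfl
    · simp [hq] at hcard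
    · simp [hrr']

variable [Fintype H]

theorem sum_eq_sum_partner_add_sum_unassigned {β : Type*} [AddCommMonoid β]
    (M : R → Option H) (hM : ∀ h, (assigned M h).card ≤ 1) (f : H → β) :
    ∑ h, f h = ∑ r, (M r).elim 0 f + ∑ h with assigned M h = ∅, f h := by
  have partner : ∀ r, (M r).elim 0 f = ∑ h, if M r = some h then f h else 0 := by
    intro r
    cases M r <;> simp
  have per_hospital :
      ∀ h, f h = (assigned M h).card • f h + if assigned M h = ∅ then f h else 0 := by
    intro h
    rcases Nat.le_one_iff_eq_zero_or_eq_one.mp (hM h) with h0 | h1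
    · simp [Finset.card_eq_zero.mp h0]
    · simp [h1, ← Finset.card_eq_zero]
  simp only [partner, Finset.sum_filter]
  rw [Finset.sum_comm, ← Finset.sum_add_distrib]
  refine Finset.sum_congr rfl fun h _ => ?_
  rw [← Finset.sum_filter, Finset.sum_const]
  exact per_hospital h

theorem popular_of_witness {G : HRLQ R H} (hq : ∀ h, G.uq h = 1) {M : R → Option H}
    {μ : H → Option R} (hM : IsMatching G M) (hμ : ∀ h, assigned M h = (μ h).toFinset)
    (α : R → ℤ) (β : H → ℤ) (hsum : ∑ r, α r + ∑ h, β h ≤ 0)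
    (hedge : ∀ r h, (r, h) ∈ G.E →
      -rvote G r (M r) (some h) - unitHVote G h (μ h) (some r) ≤ α r + β h)
    (hres : ∀ r, -rvote G r (M r) none ≤ α r)
    (hhosp : ∀ h, -unitHVote G h (μ h) none ≤ β h) :
    Popular G M := by
  refine ⟨hM, fun M' P hM' hP hmore => ?_⟩
  have hq' : ∀ h, (assigned M' h).card ≤ 1 := fun h => (hM'.2 h).trans (hq h).le
  set v := fun h => hvote G M M' h (P h) with hv
  have per_resident : ∀ r,
      -rvote G r (M r) (M' r) + (M' r).elim 0 (fun h => -v h) ≤ α r + (M' r).elim 0 β := by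
    intro r
    cases hr : M' r with
    | none => simpa using hres r
    | some h =>
      have hB : assigned M' h = (some r).toFinset := assigned_eq_singleton hr (hq' h)
      simpa [hv, hvote_eq_unitHVote (hq h) (hμ h) hB (hP h), sub_eq_add_neg]
        using hedge r h (hM'.1 r h hr)
  have per_unassigned : ∀ h ∈ (Finset.univ.filter fun h => assigned M' h = ∅), -v h ≤ β h := by
    intro h hh
    have hB : assigned M' h = (none : Option R).toFinset := (Finset.mem_filter.mp hh).2
    simpa [hv, hvote_eq_unitHVote (hq h) (hμ h) hB (hP h)] using hhosp h
  have : -totalVote G M M' P ≤ ∑ r, α r + ∑ h, β h := calc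
    -totalVote G M M' P = ∑ r, -rvote G r (M r) (M' r) + ∑ h, -v h := by
      simp only [totalVote, hv, neg_add, Finset.sum_neg_distrib]
    _ = ∑ r, (-rvote G r (M r) (M' r) + (M' r).elim 0 (fun h => -v h))
          + ∑ h with assigned M' h = ∅, -v h := by
      rw [sum_eq_sum_partner_add_sum_unassigned M' hq', Finset.sum_add_distrib, add_assoc]
    _ ≤ ∑ r, (α r + (M' r).elim 0 β) + ∑ h with assigned M' h = ∅, β h :=
      add_le_add (Finset.sum_le_sum fun r _ => per_resident r) (Finset.sum_le_sum per_unassigned)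
    _ = ∑ r, α r + ∑ h, β h := by
      rw [sum_eq_sum_partner_add_sum_unassigned M' hq' β, Finset.sum_add_distrib, add_assoc]
  exact absurd hmore (not_lt.mpr (by linarith))

end HRLQ

namespace PopularVsStable

open HRLQ

def edges : Finset (Fin 4 × Fin 4) := {(0, 0), (0, 1), (1, 0), (2, 2), (2, 3), (3, 2), (3, 3)}

-- Lower rank is preferred; the entries off `edges` are never read.
def residentRank : Fin 4 → Fin 4 → ℕ :=
  ![![0, 1, 0, 0], ![0, 0, 0, 0], ![0, 0, 0, 1], ![0, 0, 1, 0]]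

def hospitalRank : Fin 4 → Fin 4 → ℕ :=
  ![![0, 1, 0, 0], ![0, 0, 0, 0], ![0, 0, 1, 0], ![0, 0, 0, 1]]

def hrInstance : HRLQ (Fin 4) (Fin 4) :=
  ofRanks edges residentRank hospitalRank (fun _ => 1) (fun _ => le_rfl) (by decide) (by decide)

theorem hrInstance_rp {r : Fin 4} {h h' : Fin 4} :
    hrInstance.rp r h h' ↔ residentRank r h < residentRank r h' := Iff.rfl

theorem hrInstance_hp {h : Fin 4} {r r' : Fin 4} :
    hrInstance.hp h r r' ↔ hospitalRank h r < hospitalRank h r' := Iff.rfl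

def stableMatching : Fin 4 → Option (Fin 4) := ![some 0, none, some 3, some 2]

def popularMatching : Fin 4 → Option (Fin 4) := ![some 1, some 0, some 2, some 3]

-- `popularMatching` read from the hospitals' side (it is an involution of `Fin 4`).
def popularPartner : Fin 4 → Option (Fin 4) := ![some 1, some 0, some 2, some 3]

-- The edge `(r₀, h₀)` gets both of its endpoints' votes against `popularMatching`, paid for
-- by `r₁` and `h₁`, whose partners in it are their only neighbours.
def witness : Fin 4 → ℤ := ![1, -1, 0, 0]

theorem isMatching_stableMatching : IsMatching hrInstance stableMatching :=
  ⟨by decide, by decide⟩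

theorem isMatching_popularMatching : IsMatching hrInstance popularMatching :=
  ⟨by decide, by decide⟩

theorem stable_stableMatching : Stable hrInstance stableMatching := by
  unfold Stable Blocks BlocksIn WantsMore
  simp only [hrInstance_rp, hrInstance_hp]
  decide

theorem popular_popularMatching : Popular hrInstance popularMatching := by
  refine popular_of_witness (fun _ => rfl) isMatching_popularMatching (μ := popularPartner)
    (by decide) witness witness (by decide) ?_ ?_ ?_
  all_goals
    simp only [rvote, unitHVote, hrInstance_rp, hrInstance_hp]
    decide

theorem msize_stableMatching_lt : msize stableMatching < msize popularMatching := by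
  decide

theorem rank1Count_stableMatching_lt :
    rank1Count hrInstance stableMatching < rank1Count hrInstance popularMatching := by
  unfold rank1Count Rank1
  simp only [hrInstance_rp]
  decide

theorem prefCount_stableMatching_lt :
    prefCount hrInstance stableMatching popularMatching <
      prefCount hrInstance popularMatching stableMatching := by
  unfold prefCount rvote
  simp only [hrInstance_rp]
  decide

end PopularVsStable

/-- There is an HR instance (all lower quotas `0`) in which every
hospital has upper quota `1`, with a stable matching `Ms` and a popular matching `Mp`
such that `|Mp| > |Ms|`, strictly more residents are matched to their rank-1 hospital
in `Mp` than in `Ms`, and strictly more residents prefer `Mp` over `Ms` than prefer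
`Ms` over `Mp`. -/
theorem statement12 :
    ∃ (n m : ℕ) (G : HRLQ (Fin n) (Fin m)) (Ms Mp : Fin n → Option (Fin m)),
      (∀ h, G.lq h = 0) ∧ (∀ h, G.uq h = 1) ∧
      HRLQ.IsMatching G Ms ∧ HRLQ.Stable G Ms ∧
      HRLQ.Popular G Mp ∧
      HRLQ.msize Ms < HRLQ.msize Mp ∧
      HRLQ.rank1Count G Ms < HRLQ.rank1Count G Mp ∧
      HRLQ.prefCount G Ms Mp < HRLQ.prefCount G Mp Ms :=
  ⟨4, 4, PopularVsStable.hrInstance, PopularVsStable.stableMatching,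
    PopularVsStable.popularMatching, fun _ => rfl, fun _ => rfl,
    PopularVsStable.isMatching_stableMatching, PopularVsStable.stable_stableMatching,
    PopularVsStable.popular_popularMatching, PopularVsStable.msize_stableMatching_lt,
    PopularVsStable.rank1Count_stableMatching_lt, PopularVsStable.prefCount_stableMatching_lt⟩
end
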